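/- In the one-dimensional split framework, suppose in addition that p and g are continuously differentiable on [a,b], and let s* be a best split with Δ(s*) > 0. Then g′(s*) ≠ 0, 4·P(s*)·(1 − P(s*)) ≥ (4·p(s*)²·Δ(s*) / g′(s*)²)^{1/3}, and both P(s*) and 1 − P(s*) lie in the closed interval [(1 − √(1 − (4·p(s*)²·Δ(s*)/g′(s*)²)^{1/3}))/2, (1 + √(1 − (4·p(s*)²·Δ(s*)/g′(s*)²)^{1/3}))/2]. -/

import Mathlib

/-!
At an interior best split `s*` the function `h = Ξ² - Δ(s*)·P(1 - P)` is `≤ 0` near `s*` and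
vanishes at `s*`, so `h'(s*) = 0` and `h''(s*) ≤ 0`. With `Ξ' = Ḡ p` and `P' = p`, the first
condition reads `2 Ξ Ḡ = Δ (1 - 2P)`; it cancels the `p'` terms of the second one, which then
collapses (through `(1 - 2P)² + 4P(1 - P) = 1`) to `p Δ ≤ -4 P(1 - P) Ξ g'`. Squaring and
using `Ξ² = Δ P(1 - P)` gives `4 p² Δ / g'² ≤ (4 P(1 - P))³`; the interval for `P` is the
solution set of `r ≤ 4 P (1 - P)`.
-/

open MeasureTheory Set Filter Topology

theorem IsLocalMax.second_deriv_nonpos {f f' : ℝ → ℝ} {x L : ℝ} (hmax : IsLocalMax f x)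
    (hf : ∀ᶠ y in 𝓝 x, HasDerivAt f (f' y) y) (hf' : HasDerivAt f' L x) : L ≤ 0 := by
  by_contra! hL
  have hderiv : deriv f =ᶠ[𝓝 x] f' := hf.mono fun y hy => hy.deriv
  -- For `L > 0` the second-derivative test makes `x` a local minimum as well, so `f` is
  -- locally constant and `L = 0`.
  have hmin : IsLocalMin f x :=
    isLocalMin_of_deriv_deriv_pos (by rwa [(hf'.congr_of_eventuallyEq hderiv).deriv])
      (by rw [hderiv.eq_of_nhds]; exact hmax.hasDerivAt_eq_zero hf.self_of_nhds)
      hf.self_of_nhds.continuousAt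
  have hconst : f =ᶠ[𝓝 x] fun _ => f x := by
    filter_upwards [hmin, hmax] with y h₁ h₂ using le_antisymm h₂ h₁
  have hzero : deriv f =ᶠ[𝓝 x] fun _ => 0 := by
    simpa using hconst.deriv
  have := (hf'.congr_of_eventuallyEq (hderiv.symm.trans hzero).symm).unique (hasDerivAt_const x 0)
  linarith

theorem IsLocalMax.sub_mul_of_div {f q : ℝ → ℝ} {x : ℝ}
    (hmax : IsLocalMax (fun y => f y / q y) x) (hq : ∀ᶠ y in 𝓝 x, 0 < q y) :
    IsLocalMax (fun y => f y - f x / q x * q y) x := by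
  have hqx : q x ≠ 0 := hq.self_of_nhds.ne'
  filter_upwards [hmax, hq] with y hy hqy
  rw [div_le_iff₀ hqy] at hy
  simp only [div_mul_cancel₀ _ hqx, sub_self]
  linarith

theorem IsLocalMax.optimality_conditions_sq_sub_mul_mul_one_sub {X P ξ p : ℝ → ℝ}
    {x D ξ' p' : ℝ} (hmax : IsLocalMax (fun s => X s ^ 2 - D * (P s * (1 - P s))) x)
    (hX : ∀ᶠ s in 𝓝 x, HasDerivAt X (ξ s) s) (hP : ∀ᶠ s in 𝓝 x, HasDerivAt P (p s) s)
    (hξ : HasDerivAt ξ ξ' x) (hp : HasDerivAt p p' x) :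
    2 * X x * ξ x - D * (p x * (1 - 2 * P x)) = 0 ∧
      2 * ξ x ^ 2 + 2 * X x * ξ' - D * (p' * (1 - 2 * P x) - 2 * p x ^ 2) ≤ 0 := by
  have hderiv : ∀ᶠ s in 𝓝 x, HasDerivAt (fun s => X s ^ 2 - D * (P s * (1 - P s)))
      (2 * X s * ξ s - D * (p s * (1 - 2 * P s))) s := by
    filter_upwards [hX, hP] with s hXs hPs
    refine ((hXs.pow 2).sub ((hPs.mul (hPs.const_sub 1)).const_mul D)).congr_deriv ?_
    ring
  refine ⟨hmax.hasDerivAt_eq_zero hderiv.self_of_nhds, hmax.second_deriv_nonpos hderiv ?_⟩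
  refine (((hX.self_of_nhds.const_mul 2).mul hξ).sub
    ((hp.mul ((hP.self_of_nhds.const_mul 2).const_sub 1)).const_mul D)).congr_deriv ?_
  ring

theorem hasDerivAt_integral_of_continuousOn {f : ℝ → ℝ} {a b s : ℝ}
    (hf : ContinuousOn f (Icc a b)) (hs : s ∈ Ioo a b) :
    HasDerivAt (fun t => ∫ u in a..t, f u) (f s) s :=
  intervalIntegral.integral_hasDerivAt_right
    ((hf.mono (by simp [uIcc_of_le hs.1.le, Icc_subset_Icc_right hs.2.le])).intervalIntegrable)
    ((hf.mono Ioo_subset_Icc_self).stronglyMeasurableAtFilter isOpen_Ioo s hs)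
    (hf.continuousAt (Icc_mem_nhds hs.1 hs.2))

theorem integral_mem_Ioo_of_pos {p : ℝ → ℝ} {a b s : ℝ} (hp : ContinuousOn p (Icc a b))
    (hpos : ∀ u ∈ Icc a b, 0 < p u) (hone : ∫ u in a..b, p u = 1) (hs : s ∈ Ioo a b) :
    ∫ u in a..s, p u ∈ Ioo 0 1 := by
  have hleft :=
    (hp.mono (Icc_subset_Icc_right hs.2.le)).intervalIntegrable_of_Icc (μ := volume) hs.1.le
  have hright :=
    (hp.mono (Icc_subset_Icc_left hs.1.le)).intervalIntegrable_of_Icc (μ := volume) hs.2.le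
  have hsplit := intervalIntegral.integral_add_adjacent_intervals hleft hright
  have hright_pos : 0 < ∫ u in s..b, p u :=
    intervalIntegral.intervalIntegral_pos_of_pos_on hright
      (fun u hu => hpos u ⟨hs.1.le.trans hu.1.le, hu.2.le⟩) hs.2
  exact ⟨intervalIntegral.intervalIntegral_pos_of_pos_on hleft
    (fun u hu => hpos u ⟨hu.1.le, hu.2.le.trans hs.2.le⟩) hs.1, by linarith⟩

theorem mul_le_of_optimality_conditions {P p p' g' D X G : ℝ} (hp : 0 < p) (hD : 0 < D)
    (hX : X ^ 2 = D * (P * (1 - P)))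
    (hfoc : 2 * X * (G * p) - D * (p * (1 - 2 * P)) = 0)
    (hsoc : 2 * (G * p) ^ 2 + 2 * X * (g' * p + G * p') -
      D * (p' * (1 - 2 * P) - 2 * p ^ 2) ≤ 0) :
    p * D ≤ -(4 * (P * (1 - P)) * X * g') := by
  have hGX : 2 * X * G = D * (1 - 2 * P) :=
    mul_left_cancel₀ hp.ne' (by linear_combination hfoc)
  have hcurv : G ^ 2 * p + X * g' + D * p ≤ 0 := by
    have : p * (2 * (G ^ 2 * p + X * g' + D * p)) ≤ 0 := by
      linear_combination hsoc - p' * hGX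
    nlinarith
  have key : D * (D * p + 4 * (P * (1 - P)) * X * g') =
      4 * X ^ 2 * (G ^ 2 * p + X * g' + D * p) := by
    linear_combination (-p * (2 * X * G + D * (1 - 2 * P))) * hGX + (-4 * D * p - 4 * X * g') * hX
  nlinarith [sq_nonneg X]

theorem cube_root_bound_of_optimality_conditions {P p p' g' D X G : ℝ} (hP : 0 < P * (1 - P))
    (hp : 0 < p) (hD : 0 < D) (hX : X ^ 2 = D * (P * (1 - P)))
    (hfoc : 2 * X * (G * p) - D * (p * (1 - 2 * P)) = 0)
    (hsoc : 2 * (G * p) ^ 2 + 2 * X * (g' * p + G * p') -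
      D * (p' * (1 - 2 * P) - 2 * p ^ 2) ≤ 0) :
    g' ≠ 0 ∧ (4 * p ^ 2 * D / g' ^ 2) ^ ((1 : ℝ) / 3) ≤ 4 * P * (1 - P) := by
  have h := mul_le_of_optimality_conditions hp hD hX hfoc hsoc
  have hg' : g' ≠ 0 := by
    rintro rfl
    nlinarith [mul_pos hp hD]
  refine ⟨hg', ?_⟩
  have hsq : D * (p ^ 2 * D) ≤ D * (16 * (P * (1 - P)) ^ 3 * g' ^ 2) := by
    linear_combination pow_le_pow_left₀ (mul_pos hp hD).le h 2 +
      16 * (P * (1 - P)) ^ 2 * g' ^ 2 * hX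
  rw [one_div, Real.rpow_inv_le_iff_of_pos (by positivity) (by linarith) (by norm_num),
    div_le_iff₀ (by positivity)]
  exact_mod_cast (by linear_combination 4 * le_of_mul_le_mul_left hsq hD :
    4 * p ^ 2 * D ≤ (4 * P * (1 - P)) ^ 3 * g' ^ 2)

theorem mem_Icc_of_le_four_mul_mul_one_sub {r x : ℝ} (h : r ≤ 4 * x * (1 - x)) :
    x ∈ Icc ((1 - √(1 - r)) / 2) ((1 + √(1 - r)) / 2) := by
  have := abs_le.mp (Real.abs_le_sqrt (x := 1 - 2 * x) (y := 1 - r) (by nlinarith))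
  constructor <;> linarith

theorem best_split_cube_root_bound_general
    (a b : ℝ)
    (p g : ℝ → ℝ)
    (hp_cont : ContinuousOn p (Set.Icc a b))
    (hp_pos : ∀ u ∈ Set.Icc a b, 0 < p u)
    (hp_one : (∫ u in a..b, p u) = 1)
    (hg_cont : ContinuousOn g (Set.Icc a b))
    (p' g' : ℝ → ℝ)
    (hp' : ∀ s ∈ Set.Icc a b, HasDerivWithinAt p (p' s) (Set.Icc a b) s)
    (hg' : ∀ s ∈ Set.Icc a b, HasDerivWithinAt g (g' s) (Set.Icc a b) s)
    (P M Xi Δ : ℝ → ℝ)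
    (hP : ∀ s, P s = ∫ u in a..s, p u)
    (hM : ∀ s, M s = ∫ u in a..s, g u * p u)
    (hXi : ∀ s, Xi s = M s - M b * P s)
    (hΔ : ∀ s, Δ s = Xi s ^ 2 / (P s * (1 - P s)))
    (sstar : ℝ) (hmem : sstar ∈ Set.Icc a b)
    (hmax : ∀ s ∈ Set.Icc a b, Δ s ≤ Δ sstar)
    (hpos : 0 < Δ sstar)
    (r : ℝ) (hr : r = (4 * p sstar ^ 2 * Δ sstar / g' sstar ^ 2) ^ ((1 : ℝ) / 3)) :
    g' sstar ≠ 0 ∧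
    r ≤ 4 * P sstar * (1 - P sstar) ∧
    P sstar ∈ Set.Icc ((1 - Real.sqrt (1 - r)) / 2) ((1 + Real.sqrt (1 - r)) / 2) ∧
    (1 - P sstar) ∈ Set.Icc ((1 - Real.sqrt (1 - r)) / 2) ((1 + Real.sqrt (1 - r)) / 2) := by
  -- `Δ a = Δ b = 0` because the denominator `P(1 - P)` vanishes there and `x / 0 = 0`.
  have hs : sstar ∈ Ioo a b := by
    refine ⟨hmem.1.lt_of_ne ?_, hmem.2.lt_of_ne ?_⟩ <;> rintro rfl <;>
      simp [hΔ, hP, hp_one] at hpos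
  have hnhds : Ioo a b ∈ 𝓝 sstar := Ioo_mem_nhds hs.1 hs.2
  have hQ : ∀ s ∈ Ioo a b, 0 < P s * (1 - P s) := fun s hs => by
    obtain ⟨h₀, h₁⟩ := hP s ▸ integral_mem_Ioo_of_pos hp_cont hp_pos hp_one hs
    exact mul_pos h₀ (sub_pos.2 h₁)
  have hloc : IsLocalMax (fun s => Xi s ^ 2 - Δ sstar * (P s * (1 - P s))) sstar := by
    rw [hΔ sstar]
    refine IsLocalMax.sub_mul_of_div ?_ (eventually_of_mem hnhds hQ)
    rw [← funext hΔ]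
    exact IsMaxOn.isLocalMax hmax (Icc_mem_nhds hs.1 hs.2)
  have hdP : ∀ s ∈ Ioo a b, HasDerivAt P (p s) s :=
    fun s hs => funext hP ▸ hasDerivAt_integral_of_continuousOn hp_cont hs
  have hdXi : ∀ s ∈ Ioo a b, HasDerivAt Xi ((g s - M b) * p s) s := fun s hs => by
    rw [funext hXi]
    exact ((funext hM ▸ hasDerivAt_integral_of_continuousOn (hg_cont.mul hp_cont) hs).sub
      ((hdP s hs).const_mul (M b))).congr_deriv (by rw [Pi.mul_apply]; ring)
  have hdp := (hp' sstar hmem).hasDerivAt (Icc_mem_nhds hs.1 hs.2)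
  have hdg := (hg' sstar hmem).hasDerivAt (Icc_mem_nhds hs.1 hs.2)
  obtain ⟨hfoc, hsoc⟩ := hloc.optimality_conditions_sq_sub_mul_mul_one_sub
    (eventually_of_mem hnhds hdXi) (eventually_of_mem hnhds hdP)
    ((hdg.sub_const (M b)).mul hdp) hdp
  have hXi_sq : Xi sstar ^ 2 = Δ sstar * (P sstar * (1 - P sstar)) := by
    rw [hΔ, div_mul_cancel₀ _ (hQ sstar hs).ne']
  obtain ⟨hg'_ne, hr_le⟩ := cube_root_bound_of_optimality_conditions (hQ sstar hs)
    (hp_pos sstar hmem) hpos hXi_sq hfoc hsoc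
  rw [← hr] at hr_le
  exact ⟨hg'_ne, hr_le, mem_Icc_of_le_four_mul_mul_one_sub hr_le,
    mem_Icc_of_le_four_mul_mul_one_sub (by linarith)⟩

/-- If `p` and `g` are `C¹` on `[a,b]` and `s*` is a best split with
`Δ(s*) > 0`, then `g′(s*) ≠ 0`, `4 P(s*)(1 − P(s*)) ≥ (4 p(s*)² Δ(s*)/g′(s*)²)^{1/3}`, and
both `P(s*)` and `1 − P(s*)` lie in the corresponding closed interval. -/
theorem best_split_cube_root_bound
    (a b : ℝ) (hab : a < b)
    (p g : ℝ → ℝ)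
    (hp_cont : ContinuousOn p (Set.Icc a b))
    (hp_pos : ∀ u ∈ Set.Icc a b, 0 < p u)
    (hp_one : (∫ u in a..b, p u) = 1)
    (hg_cont : ContinuousOn g (Set.Icc a b))
    (p' g' : ℝ → ℝ)
    (hp' : ∀ s ∈ Set.Icc a b, HasDerivWithinAt p (p' s) (Set.Icc a b) s)
    (hp'_cont : ContinuousOn p' (Set.Icc a b))
    (hg' : ∀ s ∈ Set.Icc a b, HasDerivWithinAt g (g' s) (Set.Icc a b) s)
    (hg'_cont : ContinuousOn g' (Set.Icc a b))
    (P M Xi G Δ : ℝ → ℝ)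
    (hP : ∀ s, P s = ∫ u in a..s, p u)
    (hM : ∀ s, M s = ∫ u in a..s, g u * p u)
    (hXi : ∀ s, Xi s = M s - M b * P s)
    (hG : ∀ s, G s = g s - M b)
    (hΔ : ∀ s, Δ s = Xi s ^ 2 / (P s * (1 - P s)))
    (sstar : ℝ) (hmem : sstar ∈ Set.Icc a b)
    (hmax : ∀ s ∈ Set.Icc a b, Δ s ≤ Δ sstar)
    (hpos : 0 < Δ sstar)
    (r : ℝ) (hr : r = (4 * p sstar ^ 2 * Δ sstar / g' sstar ^ 2) ^ ((1 : ℝ) / 3)) :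
    g' sstar ≠ 0 ∧
    r ≤ 4 * P sstar * (1 - P sstar) ∧
    P sstar ∈ Set.Icc ((1 - Real.sqrt (1 - r)) / 2) ((1 + Real.sqrt (1 - r)) / 2) ∧
    (1 - P sstar) ∈ Set.Icc ((1 - Real.sqrt (1 - r)) / 2) ((1 + Real.sqrt (1 - r)) / 2) :=
  best_split_cube_root_bound_general a b p g hp_cont hp_pos hp_one hg_cont p' g' hp' hg' P M Xi Δ hP
    hM hXi hΔ sstar hmem hmax hpos r hr
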